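/- arXiv:1803.07303 — 3 statements merged into one kernel-verified Lean document; each statement's English description precedes it below -/
import Mathlib

section
/- The embedding relation on graphs is transitive: if G ≼ H and H ≼ K then G ≼ K. -/
/-- A graph with predicate labels in `L` and an occurrence interval (a set of
naturals) on every edge. -/
structure ShExGraph (L : Type) where
  N : Type
  E : Type
  [fintypeN : Fintype N]
  [fintypeE : Fintype E]
  [deqN : DecidableEq N]
  [deqE : DecidableEq E]
  source : E → N
  target : E → N
  lab : E → L
  occur : E → Set ℕ

attribute [instance] ShExGraph.fintypeN ShExGraph.fintypeE ShExGraph.deqN ShExGraph.deqE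

/-- Point-wise sum of a finite family of sets of naturals:
⊕_{a ∈ s} F a = { Σ_{a ∈ s} g a | g a ∈ F a }.  The empty sum is {0}. -/
def setSum {α : Type} (s : Finset α) (F : α → Set ℕ) : Set ℕ :=
  {x | ∃ g : α → ℕ, (∀ a ∈ s, g a ∈ F a) ∧ x = ∑ a ∈ s, g a}

/-- R ⊆ N_G × N_H is a simulation of G in H if every pair (n,m) ∈ R has a
witness λ from the out-edges of n to the out-edges of m preserving labels,
with related targets, and such that for every out-edge f of m the point-wise
sum of the occurrence intervals of the edges mapped to f is included in the
occurrence interval of f. -/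
def IsSimulation {L : Type} (G H : ShExGraph L) (R : Set (G.N × H.N)) : Prop :=
  ∀ p ∈ R, ∃ lam : {e : G.E // G.source e = p.1} → {f : H.E // H.source f = p.2},
    (∀ e, G.lab e.1 = H.lab (lam e).1) ∧
    (∀ e, (G.target e.1, H.target (lam e).1) ∈ R) ∧
    (∀ f : {f : H.E // H.source f = p.2},
      setSum (Finset.univ.filter (fun e => lam e = f)) (fun e => G.occur e.1)
        ⊆ H.occur f.1)

/-- G ≼ H : there is a simulation of G in H whose domain is all of N_G. -/
def Embeds {L : Type} (G H : ShExGraph L) : Prop :=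
  ∃ R : Set (G.N × H.N), IsSimulation G H R ∧ ∀ n : G.N, ∃ m, (n, m) ∈ R

/-- A simple graph: every occurrence interval is [1;1] and there are no two
distinct edges with the same source, target and label. -/
def IsSimple {L : Type} (G : ShExGraph L) : Prop :=
  (∀ e : G.E, G.occur e = Set.Icc 1 1) ∧
  (∀ e e' : G.E, G.source e = G.source e' → G.target e = G.target e' →
    G.lab e = G.lab e' → e = e')

open Finset SetRel

lemma setSum_mono {α : Type} {s : Finset α} {F F' : α → Set ℕ} (h : ∀ a ∈ s, F a ⊆ F' a) :
    setSum s F ⊆ setSum s F' := by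
  rintro _ ⟨w, hw, rfl⟩
  exact ⟨w, fun a ha => h a ha (hw a ha), rfl⟩

lemma setSum_subset_setSum_fiberwise {α β : Type} [DecidableEq β] {s : Finset α} {t : Finset β}
    {g : α → β} (hg : ∀ a ∈ s, g a ∈ t) (F : α → Set ℕ) :
    setSum s F ⊆ setSum t (fun b => setSum {a ∈ s | g a = b} F) := by
  rintro _ ⟨w, hw, rfl⟩
  exact ⟨fun b => ∑ a ∈ s with g a = b, w a,
    fun b _ => ⟨w, fun a ha => hw a (mem_filter.1 ha).1, rfl⟩,
    (sum_fiberwise_of_maps_to hg w).symm⟩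

theorem IsSimulation.comp {L : Type} {G H K : ShExGraph L} {R : Set (G.N × H.N)}
    {S : Set (H.N × K.N)} (hR : IsSimulation G H R) (hS : IsSimulation H K S) :
    IsSimulation G K (R ○ S) := by
  rintro ⟨n, k⟩ ⟨m, hnm, hmk⟩
  obtain ⟨lam, hlab, htgt, hsum⟩ := hR (n, m) hnm
  obtain ⟨mu, hlab', htgt', hsum'⟩ := hS (m, k) hmk
  refine ⟨mu ∘ lam, fun e => (hlab e).trans (hlab' (lam e)),
    fun e => ⟨_, htgt e, htgt' (lam e)⟩, fun f => ?_⟩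
  have hfiber : ∀ f' ∈ univ.filter (fun f' => mu f' = f),
      (univ.filter fun e => mu (lam e) = f).filter (fun e => lam e = f') =
        univ.filter fun e => lam e = f' := by
    intro f' hf'
    ext e
    simp only [mem_filter, mem_univ, true_and] at hf' ⊢
    exact ⟨And.right, fun h => ⟨h ▸ hf', h⟩⟩
  -- Group the edges that `mu ∘ lam` sends to `f` by their image `f'` under `lam`.
  calc setSum (univ.filter fun e => mu (lam e) = f) (fun e => G.occur e.1)
      ⊆ setSum (univ.filter fun f' => mu f' = f)
          (fun f' => setSum (univ.filter fun e => lam e = f') (fun e => G.occur e.1)) := by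
        refine (setSum_subset_setSum_fiberwise (g := lam) (fun e he => ?_) _).trans
          (setSum_mono fun f' hf' => by rw [hfiber f' hf'])
        simpa using he
    _ ⊆ setSum (univ.filter fun f' => mu f' = f) (fun f' => H.occur f'.1) :=
        setSum_mono fun f' _ => hsum f'
    _ ⊆ K.occur f.1 := hsum' f

/-- The embedding relation is transitive: G ≼ H and H ≼ K imply G ≼ K. -/
theorem embeds_trans {L : Type} (G H K : ShExGraph L)
    (h1 : Embeds G H) (h2 : Embeds H K) : Embeds G K := by
  obtain ⟨R, hR, hRdom⟩ := h1
  obtain ⟨S, hS, hSdom⟩ := h2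
  refine ⟨R ○ S, hR.comp hS, fun n => ?_⟩
  obtain ⟨m, hnm⟩ := hRdom n
  obtain ⟨k, hmk⟩ := hSdom m
  exact ⟨k, m, hnm, hmk⟩
end

section
/- Typings of a simple graph G with respect to a ShEx schema S are closed under union: if T1 and T2 are valid typings then T1 ∪ T2 is a valid typing. Consequently there exists a unique maximal valid typing of G w.r.t. S. -/
def bagLangUnion {Δ : Type} (L1 L2 : Set (Δ → ℕ)) : Set (Δ → ℕ) :=
  {w | ∃ w1 ∈ L1, ∃ w2 ∈ L2, w = w1 + w2}

def bagLangPow {Δ : Type} (L : Set (Δ → ℕ)) : ℕ → Set (Δ → ℕ)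
  | 0 => {0}
  | i + 1 => bagLangUnion L (bagLangPow L i)

/-- Regular bag expressions. -/
inductive RBE (Δ : Type) where
  | eps : RBE Δ
  | sym (a : Δ) : RBE Δ
  | alt (e1 e2 : RBE Δ) : RBE Δ
  | conc (e1 e2 : RBE Δ) : RBE Δ
  | iter (e : RBE Δ) (I : Set ℕ) : RBE Δ

def RBE.lang {Δ : Type} [DecidableEq Δ] : RBE Δ → Set (Δ → ℕ)
  | .eps => {0}
  | .sym a => {fun b => if b = a then 1 else 0}
  | .alt e1 e2 => e1.lang ∪ e2.lang
  | .conc e1 e2 => bagLangUnion e1.lang e2.lang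
  | .iter e I => ⋃ i ∈ I, bagLangPow e.lang i

/-- The language of the signature sign_G^T(n) = ‖_{e ∈ out(n)} (|_{t ∈ T(target e)} lab(e)::t):
a bag over Σ × Γ belongs to it iff it is obtained by choosing for every out-edge e of n
one type τ(e) ∈ T(target e) and collecting the symbols (lab e, τ e). -/
def signLang {L Γ : Type} [DecidableEq L] [DecidableEq Γ]
    (G : ShExGraph L) (T : Set (G.N × Γ)) (n : G.N) : Set (L × Γ → ℕ) :=
  {w | ∃ τ : G.E → Γ,
    (∀ e, G.source e = n → (G.target e, τ e) ∈ T) ∧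
    (∀ c : L × Γ,
      w c = (Finset.univ.filter
        (fun e : G.E => G.source e = n ∧ (G.lab e, τ e) = c)).card)}

/-- A typing T of G w.r.t. a schema δ : Γ → RBE (Σ × Γ) is valid iff
L(sign_G^T(n)) ∩ L(δ(t)) ≠ ∅ for every (n,t) ∈ T. -/
def ValidTyping {L Γ : Type} [DecidableEq L] [DecidableEq Γ]
    (G : ShExGraph L) (δ : Γ → RBE (L × Γ)) (T : Set (G.N × Γ)) : Prop :=
  ∀ p ∈ T, (signLang G T p.1 ∩ (δ p.2).lang).Nonempty

/-- The maximal typing of G w.r.t. δ: the union of all valid typings. -/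
def maxTyping {L Γ : Type} [DecidableEq L] [DecidableEq Γ]
    (G : ShExGraph L) (δ : Γ → RBE (L × Γ)) : Set (G.N × Γ) :=
  {p | ∃ T : Set (G.N × Γ), ValidTyping G δ T ∧ p ∈ T}

section Typing

variable {L Γ : Type} [DecidableEq L] [DecidableEq Γ] (G : ShExGraph L)
  (δ : Γ → RBE (L × Γ))

lemma signLang_mono {T T' : Set (G.N × Γ)} (h : T ⊆ T') (n : G.N) :
    signLang G T n ⊆ signLang G T' n := by
  rintro w ⟨τ, hτ, hw⟩
  exact ⟨τ, fun e he => h (hτ e he), hw⟩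

/-- Each pair of a member of the family keeps its witness bag: the signature only grows. -/
lemma validTyping_sUnion {S : Set (Set (G.N × Γ))} (hS : ∀ T ∈ S, ValidTyping G δ T) :
    ValidTyping G δ (⋃₀ S) := by
  rintro p ⟨T, hTS, hpT⟩
  obtain ⟨w, hw_sign, hw_shape⟩ := hS T hTS p hpT
  exact ⟨w, signLang_mono G (Set.subset_sUnion_of_mem hTS) p.1 hw_sign, hw_shape⟩

lemma validTyping_union {T1 T2 : Set (G.N × Γ)} (h1 : ValidTyping G δ T1)
    (h2 : ValidTyping G δ T2) : ValidTyping G δ (T1 ∪ T2) := by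
  rw [← Set.sUnion_pair]
  exact validTyping_sUnion G δ (by rintro T (rfl | rfl) <;> assumption)

lemma maxTyping_eq_sUnion : maxTyping G δ = ⋃₀ {T | ValidTyping G δ T} := by
  ext p
  simp [maxTyping]

lemma isGreatest_maxTyping : IsGreatest {T | ValidTyping G δ T} (maxTyping G δ) := by
  rw [maxTyping_eq_sUnion]
  exact ⟨validTyping_sUnion G δ fun _ hT => hT, fun _ hT => Set.subset_sUnion_of_mem hT⟩

end Typing

theorem valid_typing_union_and_maximal_general {L Γ : Type} [DecidableEq L] [DecidableEq Γ]
    (G : ShExGraph L) (δ : Γ → RBE (L × Γ)) :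
    (∀ T1 T2 : Set (G.N × Γ), ValidTyping G δ T1 → ValidTyping G δ T2 →
      ValidTyping G δ (T1 ∪ T2)) ∧
    (∃! Tmax : Set (G.N × Γ), ValidTyping G δ Tmax ∧
      ∀ T : Set (G.N × Γ), ValidTyping G δ T → T ⊆ Tmax) :=
  ⟨fun _ _ => validTyping_union G δ,
    ⟨maxTyping G δ, isGreatest_maxTyping G δ,
      fun _ hT => IsGreatest.unique (s := {T | ValidTyping G δ T}) hT
        (isGreatest_maxTyping G δ)⟩⟩

/-- Valid typings of a simple graph w.r.t. a ShEx schema are closed under union;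
consequently there is a unique maximal valid typing. -/
theorem valid_typing_union_and_maximal {L Γ : Type} [DecidableEq L] [DecidableEq Γ]
    (G : ShExGraph L) (hG : IsSimple G) (δ : Γ → RBE (L × Γ)) :
    (∀ T1 T2 : Set (G.N × Γ), ValidTyping G δ T1 → ValidTyping G δ T2 →
      ValidTyping G δ (T1 ∪ T2)) ∧
    (∃! Tmax : Set (G.N × Γ), ValidTyping G δ Tmax ∧
      ∀ T : Set (G.N × Γ), ValidTyping G δ T → T ⊆ Tmax) :=
  valid_typing_union_and_maximal_general G δ
end

section
/- If a compressed graph F satisfies a ShEx schema S, then its unpacking (the simple graph obtained by replicating each node according to edge cardinalities so that each copy has the same outbound neighborhood expanded to multiplicity, and each copy receives at most one incoming edge) also satisfies S. -/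
/-- Signature language of a node of a compressed graph F (edges carry singleton
cardinalities `card e`): sign(n) = ‖_{e ∈ out(n)} (|_{t ∈ T(target e)} lab(e)::t)^{card e},
i.e. every out-edge e contributes card e symbols (lab e, t), each with an
independently chosen type t ∈ T(target e). -/
def cSignLang {L Γ : Type} [DecidableEq L] [DecidableEq Γ] [Fintype Γ]
    (F : ShExGraph L) (card : F.E → ℕ) (T : Set (F.N × Γ)) (n : F.N) :
    Set (L × Γ → ℕ) :=
  {w | ∃ g : F.E → Γ → ℕ,
    (∀ e, F.source e = n →
      (∑ t : Γ, g e t) = card e ∧ (∀ t : Γ, g e t ≠ 0 → (F.target e, t) ∈ T)) ∧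
    (∀ c : L × Γ,
      w c = ∑ e ∈ Finset.univ.filter (fun e : F.E => F.source e = n ∧ F.lab e = c.1),
        g e c.2)}

/-- A valid typing of a compressed graph. -/
def cValidTyping {L Γ : Type} [DecidableEq L] [DecidableEq Γ] [Fintype Γ]
    (F : ShExGraph L) (card : F.E → ℕ) (δ : Γ → RBE (L × Γ)) (T : Set (F.N × Γ)) : Prop :=
  ∀ p ∈ T, (cSignLang F card T p.1 ∩ (δ p.2).lang).Nonempty

/-- The maximal valid typing of a compressed graph. -/
def cMaxTyping {L Γ : Type} [DecidableEq L] [DecidableEq Γ] [Fintype Γ]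
    (F : ShExGraph L) (card : F.E → ℕ) (δ : Γ → RBE (L × Γ)) : Set (F.N × Γ) :=
  {p | ∃ T : Set (F.N × Γ), cValidTyping F card δ T ∧ p ∈ T}

/-- U together with the projection `pr : U.N → F.N` is an unpacking of the
compressed graph F: U is simple, each copy u of a node pr u has, for every
out-edge f of pr u, exactly card f outgoing edges with label lab f leading to
copies of target f, every edge of U comes from an edge of F, and every node of
U has at most one incoming edge. -/
def IsUnpacking {L : Type} [DecidableEq L]
    (U F : ShExGraph L) (card : F.E → ℕ) (pr : U.N → F.N) : Prop :=
  IsSimple U ∧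
  (∀ (u : U.N) (f : F.E), F.source f = pr u →
    (Finset.univ.filter (fun e : U.E =>
      U.source e = u ∧ U.lab e = F.lab f ∧ pr (U.target e) = F.target f)).card
      = card f) ∧
  (∀ e : U.E, ∃ f : F.E,
    F.source f = pr (U.source e) ∧ F.lab f = U.lab e ∧
    F.target f = pr (U.target e)) ∧
  (∀ u : U.N, (Finset.univ.filter (fun e : U.E => U.target e = u)).card ≤ 1)

/-! The maximal typing of `F`, pulled back along the projection `pr`, is a valid typing of the
unpacking. Fix a copy `u` of a node `n`. Projecting the out-edges of `u` to `F`, exactly `card f`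
of them land on each out-edge `f` of `n`; this uses that `F` has no two edges with the same
source, target and label. A bag of `sign(n)` picks, for each such `f`, a multiset of `card f`
types allowed at `target f`; handing these types out to the `card f` edges over `f` yields a
choice of types for the out-edges of `u` that produces the same bag, so every type of `n` is
also a type of `u`. -/

theorem Finset.exists_card_filter_eq {α Γ : Type*} [DecidableEq Γ] [Fintype Γ] [Nonempty Γ]
    (s : Finset α) (g : Γ → ℕ) (h : s.card = ∑ t, g t) :
    ∃ σ : α → Γ, ∀ t, (s.filter (σ · = t)).card = g t := by
  classical
  let e : s ≃ Σ t, Fin (g t) := Fintype.equivOfCardEq (by simp [h])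
  refine ⟨fun a => if ha : a ∈ s then (e ⟨a, ha⟩).1 else Classical.arbitrary Γ, fun t => ?_⟩
  calc (s.filter _).card = Fintype.card {x : s // (e x).1 = t} := by
        rw [Fintype.card_subtype, ← Finset.card_map (Function.Embedding.subtype _)]
        congr 1
        ext a
        simp only [Finset.mem_filter, Finset.mem_map, Finset.mem_univ, true_and,
          Function.Embedding.coe_subtype, Subtype.exists, exists_and_right, exists_eq_right]
        constructor <;> rintro ⟨ha, hat⟩ <;> exact ⟨ha, by simpa [ha] using hat⟩
    _ = Fintype.card {y : Σ t, Fin (g t) // y.1 = t} :=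
        Fintype.card_congr (e.subtypeEquiv fun _ => Iff.rfl)
    _ = g t := by rw [Fintype.card_congr (Equiv.sigmaSubtype t), Fintype.card_fin]

theorem Finset.exists_card_filter_and_eq {α β Γ : Type*} [DecidableEq β] [DecidableEq Γ]
    [Fintype Γ] [Nonempty Γ] (s : Finset α) (φ : α → β) (B : Set β) (g : β → Γ → ℕ)
    (hg : ∀ b ∈ B, (s.filter (φ · = b)).card = ∑ t, g b t) :
    ∃ τ : α → Γ, ∀ b ∈ B, ∀ t, (s.filter fun a => φ a = b ∧ τ a = t).card = g b t := by
  classical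
  choose σ hσ using fun b (hb : b ∈ B) =>
    (s.filter (φ · = b)).exists_card_filter_eq (g b) (hg b hb)
  refine ⟨fun a => if ha : φ a ∈ B then σ (φ a) ha a else Classical.arbitrary Γ,
    fun b hb t => ?_⟩
  rw [← hσ b hb t, Finset.filter_filter]
  refine congrArg Finset.card (Finset.filter_congr fun a _ => ?_)
  constructor <;> rintro ⟨rfl, hat⟩ <;> exact ⟨rfl, by simpa [hb] using hat⟩

theorem cSignLang_mono {L Γ : Type} [DecidableEq L] [DecidableEq Γ] [Fintype Γ]
    (F : ShExGraph L) (card : F.E → ℕ) {T T' : Set (F.N × Γ)} (h : T ⊆ T') (n : F.N) :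
    cSignLang F card T n ⊆ cSignLang F card T' n := by
  rintro w ⟨g, hg, hw⟩
  exact ⟨g, fun e he => ⟨(hg e he).1, fun t ht => h ((hg e he).2 t ht)⟩, hw⟩

theorem cValidTyping_cMaxTyping {L Γ : Type} [DecidableEq L] [DecidableEq Γ] [Fintype Γ]
    (F : ShExGraph L) (card : F.E → ℕ) (δ : Γ → RBE (L × Γ)) :
    cValidTyping F card δ (cMaxTyping F card δ) := by
  rintro p ⟨T, hT, hp⟩
  exact (hT p hp).mono <| Set.inter_subset_inter_left _ <|
    cSignLang_mono F card (T' := cMaxTyping F card δ) (fun q hq => ⟨T, hT, hq⟩) p.1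

def ShExGraph.NoDuplicateEdges {L : Type} (G : ShExGraph L) : Prop :=
  ∀ e e' : G.E, G.source e = G.source e' → G.target e = G.target e' →
    G.lab e = G.lab e' → e = e'

section Unpacking

variable {L Γ : Type} [DecidableEq L] [DecidableEq Γ] [Fintype Γ]
  {F U : ShExGraph L} {card : F.E → ℕ} {pr : U.N → F.N}

theorem IsUnpacking.card_filter_proj_eq (hunp : IsUnpacking U F card pr)
    (hcomp : F.NoDuplicateEdges) {φ : U.E → F.E}
    (hφ : ∀ e, F.source (φ e) = pr (U.source e) ∧ F.lab (φ e) = U.lab e ∧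
      F.target (φ e) = pr (U.target e))
    {u : U.N} {f : F.E} (hf : F.source f = pr u) :
    (Finset.univ.filter fun e => U.source e = u ∧ φ e = f).card = card f := by
  rw [← hunp.2.1 u f hf]
  refine congrArg Finset.card (Finset.filter_congr fun e _ => and_congr_right fun he => ?_)
  obtain ⟨hsrc, hlab, htgt⟩ := hφ e
  constructor
  · rintro rfl
    exact ⟨hlab.symm, htgt.symm⟩
  · rintro ⟨hlab', htgt'⟩
    exact hcomp _ _ (by rw [hsrc, he, hf]) (by rw [htgt, htgt']) (by rw [hlab, hlab'])

theorem IsUnpacking.cSignLang_subset_signLang (hunp : IsUnpacking U F card pr)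
    (hcomp : F.NoDuplicateEdges) [Nonempty Γ] (T : Set (F.N × Γ)) (u : U.N) :
    cSignLang F card T (pr u) ⊆ signLang U (Prod.map pr id ⁻¹' T) u := by
  rintro w ⟨g, hg, hw⟩
  choose φ hφsrc hφlab hφtgt using hunp.2.2.1
  set out := Finset.univ.filter (U.source · = u)
  have hfiber : ∀ f ∈ {f | F.source f = pr u}, (out.filter (φ · = f)).card = ∑ t, g f t :=
    fun f hf => by
      rw [(hg f hf).1, Finset.filter_filter,
        hunp.card_filter_proj_eq hcomp (fun e => ⟨hφsrc e, hφlab e, hφtgt e⟩) hf]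
  obtain ⟨τ, hτ⟩ := out.exists_card_filter_and_eq φ _ g hfiber
  refine ⟨τ, fun e he => ?_, fun c => ?_⟩
  · have hf : F.source (φ e) = pr u := by rw [hφsrc, he]
    have hpos : g (φ e) (τ e) ≠ 0 := by
      rw [← hτ (φ e) hf (τ e)]
      exact Finset.card_ne_zero_of_mem
        (Finset.mem_filter.2 ⟨by simpa [out] using he, rfl, rfl⟩)
    simpa [hφtgt] using (hg (φ e) hf).2 _ hpos
  · rw [hw c, eq_comm, Finset.card_eq_sum_card_fiberwise (f := φ)
      (t := Finset.univ.filter fun f => F.source f = pr u ∧ F.lab f = c.1)]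
    · refine Finset.sum_congr rfl fun f hf => ?_
      rw [Finset.mem_filter] at hf
      rw [← hτ f hf.2.1 c.2, Finset.filter_filter, Finset.filter_filter]
      refine congrArg Finset.card (Finset.filter_congr fun e _ => ?_)
      constructor
      · rintro ⟨⟨he, hc⟩, rfl⟩
        exact ⟨he, rfl, by rw [← hc]⟩
      · rintro ⟨he, rfl, hτc⟩
        exact ⟨⟨he, Prod.ext (by rw [← hφlab, hf.2.2]) hτc⟩, rfl⟩
    · intro e he
      simp only [Finset.mem_coe, Finset.mem_filter, Finset.mem_univ, true_and] at he ⊢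
      exact ⟨by rw [hφsrc, he.1], by rw [hφlab, ← he.2]⟩

theorem IsUnpacking.validTyping_preimage (hunp : IsUnpacking U F card pr)
    (hcomp : F.NoDuplicateEdges) [Nonempty Γ] {δ : Γ → RBE (L × Γ)} {T : Set (F.N × Γ)}
    (hT : cValidTyping F card δ T) :
    ValidTyping U δ (Prod.map pr id ⁻¹' T) := fun p hp =>
  (hT _ hp).mono <| Set.inter_subset_inter_left _ <|
    hunp.cSignLang_subset_signLang hcomp T p.1

end Unpacking

theorem unpacking_satisfies_general {L Γ : Type} [DecidableEq L] [DecidableEq Γ] [Fintype Γ]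
    (F U : ShExGraph L) (card : F.E → ℕ) (pr : U.N → F.N)
    (δ : Γ → RBE (L × Γ))
    (hcomp : ∀ e e' : F.E, F.source e = F.source e' → F.target e = F.target e' →
      F.lab e = F.lab e' → e = e')
    (hunp : IsUnpacking U F card pr)
    (hsatF : ∀ n : F.N, ∃ t : Γ, (n, t) ∈ cMaxTyping F card δ) :
    ∀ u : U.N, ∃ t : Γ, (u, t) ∈ maxTyping U δ := by
  intro u
  obtain ⟨t, ht⟩ := hsatF (pr u)
  have : Nonempty Γ := ⟨t⟩
  exact ⟨t, _, hunp.validTyping_preimage hcomp (cValidTyping_cMaxTyping F card δ), ht⟩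

/-- If a compressed graph F satisfies a ShEx schema, then its unpacking also
satisfies the schema. -/
theorem unpacking_satisfies {L Γ : Type} [DecidableEq L] [DecidableEq Γ] [Fintype Γ]
    (F U : ShExGraph L) (card : F.E → ℕ) (pr : U.N → F.N)
    (δ : Γ → RBE (L × Γ))
    (hocc : ∀ e : F.E, F.occur e = Set.Icc (card e) (card e))
    (hcomp : ∀ e e' : F.E, F.source e = F.source e' → F.target e = F.target e' →
      F.lab e = F.lab e' → e = e')
    (hunp : IsUnpacking U F card pr)
    (hsatF : ∀ n : F.N, ∃ t : Γ, (n, t) ∈ cMaxTyping F card δ) :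
    ∀ u : U.N, ∃ t : Γ, (u, t) ∈ maxTyping U δ :=
  unpacking_satisfies_general F U card pr δ hcomp hunp hsatF
end
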